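/- With Q_w defined by Q_0=1, Q_1=1-z, Q_2=1-2z-3z², Q_3=1-3z-5z²-2z³+z⁴, Q_4=1-4z-6z²+2z³ and Q_w = (1+z)Q_{w-1} - 2zQ_{w-2} - 2z²Q_{w-3} + (z³+z⁴)Q_{w-4} - z⁵Q_{w-5} for w ≥ 5, and F_w := Q_{w-1}/Q_w (formal power series, using that Q_w has constant term 1), the family F_w satisfies F_w = 1 - zF_w + 2zF_wF_{w-1} + 2z²F_wF_{w-1}F_{w-2} - (z³+z⁴)F_wF_{w-1}F_{w-2}F_{w-3} + z⁵F_wF_{w-1}F_{w-2}F_{w-3}F_{w-4} for all w ≥ 5. -/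
import Mathlib

open PowerSeries

noncomputable def Q : ℕ → Polynomial ℚ
  | 0 => 1
  | 1 => 1 - Polynomial.X
  | 2 => 1 - 2 * Polynomial.X - 3 * Polynomial.X ^ 2
  | 3 => 1 - 3 * Polynomial.X - 5 * Polynomial.X ^ 2 - 2 * Polynomial.X ^ 3 + Polynomial.X ^ 4
  | 4 => 1 - 4 * Polynomial.X - 6 * Polynomial.X ^ 2 + 2 * Polynomial.X ^ 3
  | (n + 5) => (1 + Polynomial.X) * Q (n + 4) - 2 * Polynomial.X * Q (n + 3)
      - 2 * Polynomial.X ^ 2 * Q (n + 2) + (Polynomial.X ^ 3 + Polynomial.X ^ 4) * Q (n + 1)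
      - Polynomial.X ^ 5 * Q n

/-- `F w = Q (w-1) / Q w` as a formal power series (each `Q w` has constant term 1). -/
noncomputable def F (w : ℕ) : PowerSeries ℚ :=
  (Q (w - 1) : PowerSeries ℚ) * (Q w : PowerSeries ℚ)⁻¹

lemma Q_coeff_zero : ∀ n, (Q n).coeff 0 = 1
  | 0 => by simp [Q]
  | 1 => by simp [Q]
  | 2 => by simp [Q]
  | 3 => by simp [Q]
  | 4 => by simp [Q]
  | (n + 5) => by
      have h0 := Q_coeff_zero n
      have h1 := Q_coeff_zero (n + 1)
      have h2 := Q_coeff_zero (n + 2)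
      have h3 := Q_coeff_zero (n + 3)
      have h4 := Q_coeff_zero (n + 4)
      simp [Q, Polynomial.coeff_sub, Polynomial.coeff_add, Polynomial.mul_coeff_zero, h0, h1,
        h2, h3, h4]

lemma Q_cancel (n : ℕ) : (Q n : PowerSeries ℚ) * (Q n : PowerSeries ℚ)⁻¹ = 1 := by
  apply PowerSeries.mul_inv_cancel
  rw [Polynomial.constantCoeff_coe, Q_coeff_zero]
  exact one_ne_zero

theorem rational_family_satisfies_recurrence : ∀ w : ℕ, 5 ≤ w →
    F w = 1 - PowerSeries.X * F w + 2 * PowerSeries.X * F w * F (w - 1)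
      + 2 * PowerSeries.X ^ 2 * F w * F (w - 1) * F (w - 2)
      - (PowerSeries.X ^ 3 + PowerSeries.X ^ 4) * F w * F (w - 1) * F (w - 2) * F (w - 3)
      + PowerSeries.X ^ 5 * F w * F (w - 1) * F (w - 2) * F (w - 3) * F (w - 4) := by
  intro w hw
  obtain ⟨n, rfl⟩ : ∃ n, w = n + 5 := ⟨w - 5, by omega⟩
  have hrec : ((Q (n + 5) : Polynomial ℚ) : PowerSeries ℚ)
      = (1 + PowerSeries.X) * (Q (n + 4) : PowerSeries ℚ)
        - 2 * PowerSeries.X * (Q (n + 3) : PowerSeries ℚ)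
        - 2 * PowerSeries.X ^ 2 * (Q (n + 2) : PowerSeries ℚ)
        + (PowerSeries.X ^ 3 + PowerSeries.X ^ 4) * (Q (n + 1) : PowerSeries ℚ)
        - PowerSeries.X ^ 5 * (Q n : PowerSeries ℚ) := by
    rw [show Q (n + 5) = (1 + Polynomial.X) * Q (n + 4) - 2 * Polynomial.X * Q (n + 3)
      - 2 * Polynomial.X ^ 2 * Q (n + 2) + (Polynomial.X ^ 3 + Polynomial.X ^ 4) * Q (n + 1)
      - Polynomial.X ^ 5 * Q n from rfl]
    have h2c : ((2 : Polynomial ℚ) : PowerSeries ℚ) = 2 := by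
      rw [← Polynomial.coeToPowerSeries.ringHom_apply]; exact map_ofNat _ 2
    push_cast [h2c]
    ring
  have h1 := Q_cancel (n + 1)
  have h2 := Q_cancel (n + 2)
  have h3 := Q_cancel (n + 3)
  have h4 := Q_cancel (n + 4)
  have h5 := Q_cancel (n + 5)
  simp only [F, show n + 5 - 1 = n + 4 from rfl, show n + 5 - 2 = n + 3 from rfl,
    show n + 5 - 3 = n + 2 from rfl, show n + 5 - 4 = n + 1 from rfl,
    show n + 4 - 1 = n + 3 from rfl, show n + 3 - 1 = n + 2 from rfl,
    show n + 2 - 1 = n + 1 from rfl, show n + 1 - 1 = n from rfl]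
  set a0 : PowerSeries ℚ := (Q n : PowerSeries ℚ)
  set a1 : PowerSeries ℚ := (Q (n + 1) : PowerSeries ℚ)
  set a2 : PowerSeries ℚ := (Q (n + 2) : PowerSeries ℚ)
  set a3 : PowerSeries ℚ := (Q (n + 3) : PowerSeries ℚ)
  set a4 : PowerSeries ℚ := (Q (n + 4) : PowerSeries ℚ)
  set a5 : PowerSeries ℚ := (Q (n + 5) : PowerSeries ℚ)
  set b1 : PowerSeries ℚ := a1⁻¹
  set b2 : PowerSeries ℚ := a2⁻¹
  set b3 : PowerSeries ℚ := a3⁻¹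
  set b4 : PowerSeries ℚ := a4⁻¹
  set b5 : PowerSeries ℚ := a5⁻¹
  linear_combination h5 - b5 * hrec
    + (-2 * PowerSeries.X * a3 * b5 - 2 * PowerSeries.X ^ 2 * a2 * b5
        + (PowerSeries.X ^ 3 + PowerSeries.X ^ 4) * a1 * b5 - PowerSeries.X ^ 5 * a0 * b5) * h4
    + (a4 * b4 * (-2 * PowerSeries.X ^ 2 * a2 * b5
        + (PowerSeries.X ^ 3 + PowerSeries.X ^ 4) * a1 * b5 - PowerSeries.X ^ 5 * a0 * b5)) * h3
    + (a3 * b3 * a4 * b4 * ((PowerSeries.X ^ 3 + PowerSeries.X ^ 4) * a1 * b5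
        - PowerSeries.X ^ 5 * a0 * b5)) * h2
    + (a2 * b2 * a3 * b3 * a4 * b4 * (-(PowerSeries.X ^ 5) * a0 * b5)) * h1
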